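/- The local dependence function δ(x,y) = ∂²(ln f(x,y))/∂x∂y of the BGW density equals a²b₁b₂ x^{a-1}y^{a-1} e^{-Z}[(2-θ)/(1-e^{-Z})² - θ/(1-θe^{-Z})²], where Z = b₁x^a + b₂y^a; in particular δ(x,y) = 0 when θ = 1. -/

import Mathlib

/-! Away from the axes, `log f` is a function of `x`, plus a function of `y`, plus `φ(Z)` with
`φ(z) = -z + (θ - 2) log (1 - e^{-z}) + log (1 - θ e^{-z})` and `Z = b₁ x^a + b₂ y^a`. Since `Z` is
additive in `x` and `y`, the mixed partial is `φ''(Z) ∂ₓZ ∂ᵧZ`, and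
`φ''(z) = e^{-z} [(2 - θ)/(1 - e^{-z})² - θ/(1 - θ e^{-z})²]`. -/

open Real

/-- The BGW joint density. -/
noncomputable def bgwPDF (a b₁ b₂ θ : ℝ) (x y : ℝ) : ℝ :=
  θ * a ^ 2 * b₁ * b₂ * x ^ (a - 1) * y ^ (a - 1)
    * exp (-(b₁ * x ^ a + b₂ * y ^ a))
    * (1 - exp (-(b₁ * x ^ a + b₂ * y ^ a))) ^ (θ - 2)
    * (1 - θ * exp (-(b₁ * x ^ a + b₂ * y ^ a)))

open Filter Topology

section MixedPartial

variable {𝕜 : Type*} [NontriviallyNormedField 𝕜]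

theorem deriv_deriv_eq_of_eventuallyEq_add_comp_add {F : 𝕜 → 𝕜 → 𝕜} {g h u v φ φ' : 𝕜 → 𝕜}
    {x y u' v' φ'' : 𝕜}
    (hF : ∀ᶠ y' in 𝓝 y, ∀ᶠ x' in 𝓝 x, F x' y' = g x' + h y' + φ (u x' + v y'))
    (hg : DifferentiableAt 𝕜 g x) (hu : HasDerivAt u u' x) (hv : HasDerivAt v v' y)
    (hφ : ∀ᶠ z in 𝓝 (u x + v y), HasDerivAt φ (φ' z) z)
    (hφ' : HasDerivAt φ' φ'' (u x + v y)) :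
    deriv (fun y' => deriv (fun x' => F x' y') x) y = φ'' * v' * u' := by
  have hZ : HasDerivAt (fun y' => u x + v y') v' y := hv.const_add (u x)
  have hφ_near : ∀ᶠ y' in 𝓝 y, HasDerivAt φ (φ' (u x + v y')) (u x + v y') :=
    hZ.continuousAt.tendsto.eventually hφ
  have inner : (fun y' => deriv (fun x' => F x' y') x)
      =ᶠ[𝓝 y] fun y' => deriv g x + φ' (u x + v y') * u' := by
    filter_upwards [hF, hφ_near] with y' hFy' hφy'
    rw [Filter.EventuallyEq.deriv_eq hFy']
    exact ((hg.hasDerivAt.add_const (h y')).add (hφy'.comp x (hu.add_const (v y')))).deriv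
  rw [inner.deriv_eq]
  exact (((hφ'.comp y hZ).mul_const u').const_add (deriv g x)).deriv

end MixedPartial

theorem hasDerivAt_exp_neg (z : ℝ) : HasDerivAt (fun z => exp (-z)) (-exp (-z)) z := by
  simpa using (hasDerivAt_neg z).exp

section BGW

variable {θ z : ℝ}

theorem exp_neg_lt_one (hz : 0 < z) : exp (-z) < 1 :=
  exp_lt_one_iff.mpr (neg_lt_zero.mpr hz)

theorem one_sub_exp_neg_pos (hz : 0 < z) : 0 < 1 - exp (-z) :=
  sub_pos.mpr (exp_neg_lt_one hz)

theorem one_sub_mul_exp_neg_pos (hθ : θ ≤ 1) (hz : 0 < z) : 0 < 1 - θ * exp (-z) :=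
  sub_pos.mpr ((mul_le_of_le_one_left (exp_pos _).le hθ).trans_lt (exp_neg_lt_one hz))

noncomputable def bgwLogProfile (θ z : ℝ) : ℝ :=
  -z + (θ - 2) * log (1 - exp (-z)) + log (1 - θ * exp (-z))

noncomputable def bgwLogProfileDeriv (θ z : ℝ) : ℝ :=
  -1 + (θ - 2) * (exp (-z) / (1 - exp (-z))) + θ * (exp (-z) / (1 - θ * exp (-z)))

theorem hasDerivAt_bgwLogProfile (hθ : θ ≤ 1) (hz : 0 < z) :
    HasDerivAt (bgwLogProfile θ) (bgwLogProfileDeriv θ z) z := by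
  have hE := hasDerivAt_exp_neg z
  have h := ((hasDerivAt_neg z).add
    (((hE.const_sub 1).log (one_sub_exp_neg_pos hz).ne').const_mul (θ - 2))).add
    (((hE.const_mul θ).const_sub 1).log (one_sub_mul_exp_neg_pos hθ hz).ne')
  exact h.congr_deriv (by rw [bgwLogProfileDeriv]; ring)

theorem hasDerivAt_bgwLogProfileDeriv (hθ : θ ≤ 1) (hz : 0 < z) :
    HasDerivAt (bgwLogProfileDeriv θ)
      (exp (-z) * ((2 - θ) / (1 - exp (-z)) ^ 2 - θ / (1 - θ * exp (-z)) ^ 2)) z := by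
  have hE := hasDerivAt_exp_neg z
  have h := (((hE.fun_div (hE.const_sub 1) (one_sub_exp_neg_pos hz).ne').const_mul
    (θ - 2)).const_add (-1)).add
    ((hE.fun_div ((hE.const_mul θ).const_sub 1) (one_sub_mul_exp_neg_pos hθ hz).ne').const_mul θ)
  exact h.congr_deriv (by ring)

theorem exp_bgwLogProfile (hθ : θ ≤ 1) (hz : 0 < z) :
    exp (bgwLogProfile θ z) = exp (-z) * (1 - exp (-z)) ^ (θ - 2) * (1 - θ * exp (-z)) := by
  rw [bgwLogProfile, exp_add, exp_add, exp_log (one_sub_mul_exp_neg_pos hθ hz),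
    rpow_def_of_pos (one_sub_exp_neg_pos hz), mul_comm (log _)]

theorem log_bgwPDF {a b₁ b₂ x y : ℝ} (ha : a ≠ 0) (hb₁ : 0 < b₁) (hb₂ : 0 < b₂) (hθ0 : θ ≠ 0)
    (hθ1 : θ ≤ 1) (hx : 0 < x) (hy : 0 < y) :
    log (bgwPDF a b₁ b₂ θ x y) = log (θ * a ^ 2 * b₁ * b₂) + (a - 1) * log x
      + (a - 1) * log y + bgwLogProfile θ (b₁ * x ^ a + b₂ * y ^ a) := by
  have hZ : 0 < b₁ * x ^ a + b₂ * y ^ a := by positivity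
  have hf : bgwPDF a b₁ b₂ θ x y = θ * a ^ 2 * b₁ * b₂ * x ^ (a - 1) * y ^ (a - 1)
      * exp (bgwLogProfile θ (b₁ * x ^ a + b₂ * y ^ a)) := by
    rw [exp_bgwLogProfile hθ1 hZ, bgwPDF]
    ring
  have hC : θ * a ^ 2 * b₁ * b₂ ≠ 0 := by positivity
  rw [hf, log_mul (by positivity) (exp_pos _).ne', log_mul (by positivity) (by positivity),
    log_mul hC (by positivity), log_exp, log_rpow hx, log_rpow hy]

end BGW

/-- The local dependence function `δ(x,y) = ∂²(ln f)/∂x∂y` of the BGW density equals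
`a²b₁b₂ x^{a-1}y^{a-1} e^{-Z}[(2-θ)/(1-e^{-Z})² - θ/(1-θe^{-Z})²]`, `Z = b₁x^a + b₂y^a`;
in particular it vanishes when `θ = 1`. -/
theorem bgw_local_dependence (a b₁ b₂ θ : ℝ) (ha : 0 < a) (hb₁ : 0 < b₁) (hb₂ : 0 < b₂)
    (hθ0 : 0 < θ) (hθ1 : θ ≤ 1) (x y : ℝ) (hx : 0 < x) (hy : 0 < y) :
    deriv (fun y' : ℝ => deriv (fun x' : ℝ => Real.log (bgwPDF a b₁ b₂ θ x' y')) x) y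
        = a ^ 2 * b₁ * b₂ * x ^ (a - 1) * y ^ (a - 1)
            * exp (-(b₁ * x ^ a + b₂ * y ^ a))
            * ((2 - θ) / (1 - exp (-(b₁ * x ^ a + b₂ * y ^ a))) ^ 2
                - θ / (1 - θ * exp (-(b₁ * x ^ a + b₂ * y ^ a))) ^ 2)
      ∧ (θ = 1 →
          a ^ 2 * b₁ * b₂ * x ^ (a - 1) * y ^ (a - 1)
            * exp (-(b₁ * x ^ a + b₂ * y ^ a))
            * ((2 - θ) / (1 - exp (-(b₁ * x ^ a + b₂ * y ^ a))) ^ 2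
                - θ / (1 - θ * exp (-(b₁ * x ^ a + b₂ * y ^ a))) ^ 2) = 0) := by
  have hZ : 0 < b₁ * x ^ a + b₂ * y ^ a := by positivity
  have hlog : ∀ᶠ y' in 𝓝 y, ∀ᶠ x' in 𝓝 x, log (bgwPDF a b₁ b₂ θ x' y')
      = (log (θ * a ^ 2 * b₁ * b₂) + (a - 1) * log x') + (a - 1) * log y'
        + bgwLogProfile θ (b₁ * x' ^ a + b₂ * y' ^ a) := by
    filter_upwards [eventually_gt_nhds hy] with y' hy'
    filter_upwards [eventually_gt_nhds hx] with x' hx'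
    exact log_bgwPDF ha.ne' hb₁ hb₂ hθ0.ne' hθ1 hx' hy'
  have hφ : ∀ᶠ z in 𝓝 (b₁ * x ^ a + b₂ * y ^ a),
      HasDerivAt (bgwLogProfile θ) (bgwLogProfileDeriv θ z) z := by
    filter_upwards [eventually_gt_nhds hZ] with z hz
    exact hasDerivAt_bgwLogProfile hθ1 hz
  refine ⟨?_, fun hθ => by subst hθ; ring⟩
  rw [deriv_deriv_eq_of_eventuallyEq_add_comp_add hlog
    (((differentiableAt_log hx.ne').const_mul _).const_add _)
    ((hasDerivAt_rpow_const (Or.inl hx.ne')).const_mul b₁)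
    ((hasDerivAt_rpow_const (Or.inl hy.ne')).const_mul b₂) hφ
    (hasDerivAt_bgwLogProfileDeriv hθ1 hZ)]
  ring
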